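/- arXiv:1308.3381 — 2 statements merged into one kernel-verified Lean document; each statement's English description precedes it below -/
import Mathlib

section
/- For λ > 0 and S symmetric positive semidefinite, the graphical lasso objective f(Θ) = log det Θ − tr(SΘ) − λ‖Θ‖₁ tends to −∞ both as the smallest eigenvalue of Θ tends to 0 and as ‖Θ‖₁ → ∞; consequently the supremum of f over positive definite matrices is finite. -/
/-!
Diagonalize `Θ` with eigenvalues `μᵢ > 0`. Bounding each `log μᵢ` by its tangent line
`log c + μᵢ / c - 1` at `c = 2 / λ` gives `log det Θ ≤ p (log c - 1) + (λ / 2) tr Θ`, and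
`tr Θ ≤ ‖Θ‖₁`, `tr (S Θ) ≥ 0`; so the objective is at most `p (log c - 1) - (λ / 2) ‖Θ‖₁`, which
gives both the bound from above and coercivity in `‖Θ‖₁`. Keeping one eigenvalue `μₖ` out of the
tangent bound (now at `c = 1 / λ`) leaves `log μₖ + const`, and a vector `v` with small `vᵀ Θ v`
and sup norm `1` (so `vᵀ v ≥ 1`) forces the smallest eigenvalue to be small.
-/

open Matrix Finset

theorem Real.log_le_log_add_div_sub_one {c x : ℝ} (hc : 0 < c) (hx : 0 < x) :
    Real.log x ≤ Real.log c + x / c - 1 := by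
  have := Real.log_le_sub_one_of_pos (div_pos hx hc)
  rw [Real.log_div hx.ne' hc.ne'] at this
  linarith

section TangentBound

variable {ι : Type*} [Fintype ι] {μ : ι → ℝ} {c : ℝ}

theorem sum_log_le_of_pos (hμ : ∀ i, 0 < μ i) (hc : 0 < c) :
    ∑ i, Real.log (μ i) ≤ Fintype.card ι * (Real.log c - 1) + (∑ i, μ i) / c := by
  calc ∑ i, Real.log (μ i) ≤ ∑ i, (Real.log c - 1 + μ i / c) :=
        sum_le_sum fun i _ => by linarith [Real.log_le_log_add_div_sub_one hc (hμ i)]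
    _ = _ := by simp [sum_add_distrib, sum_div, mul_sub]

theorem sum_log_le_log_add_of_pos (hμ : ∀ i, 0 < μ i) (hc : 0 < c) (k : ι) :
    ∑ i, Real.log (μ i)
      ≤ Real.log (μ k) + (Fintype.card ι - 1) * (Real.log c - 1) + (∑ i, μ i) / c := by
  set gap : ι → ℝ := fun i => Real.log c + μ i / c - 1 - Real.log (μ i)
  have hgap : gap k ≤ ∑ i, gap i := single_le_sum (fun i _ =>
    sub_nonneg.2 (Real.log_le_log_add_div_sub_one hc (hμ i))) (mem_univ k)
  have hsum : ∑ i, gap i =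
      Fintype.card ι * (Real.log c - 1) + (∑ i, μ i) / c - ∑ i, Real.log (μ i) := by
    simp only [gap, sum_sub_distrib, sum_add_distrib, sum_div, sum_const, card_univ,
      nsmul_eq_mul]
    ring
  have hμk : 0 ≤ μ k / c := div_nonneg (hμ k).le hc.le
  simp only [gap] at hgap
  linarith

end TangentBound

theorem sq_norm_le_dotProduct_self {n : Type*} [Fintype n] (v : n → ℝ) : ‖v‖ ^ 2 ≤ v ⬝ᵥ v := by
  have hcoord : ‖v‖ ≤ √(v ⬝ᵥ v) := (pi_norm_le_iff_of_nonneg (Real.sqrt_nonneg _)).2 fun i => by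
    rw [Real.norm_eq_abs]
    refine Real.abs_le_sqrt ?_
    rw [sq]
    exact single_le_sum (f := fun j => v j * v j) (fun j _ => mul_self_nonneg _) (mem_univ i)
  calc ‖v‖ ^ 2 ≤ √(v ⬝ᵥ v) ^ 2 := by gcongr
    _ = v ⬝ᵥ v := Real.sq_sqrt (sum_nonneg fun i _ => mul_self_nonneg (v i))

namespace Matrix

variable {n : Type*} [Fintype n]

theorem trace_le_sum_sum_abs (A : Matrix n n ℝ) : A.trace ≤ ∑ i, ∑ j, |A i j| :=
  sum_le_sum fun i _ => (le_abs_self _).trans <|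
    single_le_sum (f := fun j => |A i j|) (fun _ _ => abs_nonneg _) (mem_univ i)

variable [DecidableEq n]

open scoped MatrixOrder in
theorem PosSemidef.trace_mul_nonneg {S A : Matrix n n ℝ} (hS : S.PosSemidef)
    (hA : A.PosSemidef) : 0 ≤ (S * A).trace := by
  obtain ⟨B, rfl⟩ := CStarAlgebra.nonneg_iff_eq_star_mul_self.mp hS.nonneg
  rw [mul_assoc, trace_mul_comm, mul_assoc]
  simpa [star_eq_conjTranspose, mul_assoc] using (hA.mul_mul_conjTranspose_same B).trace_nonneg

theorem IsHermitian.trace_eq_sum_eigenvalues_real {A : Matrix n n ℝ} (hA : A.IsHermitian) :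
    A.trace = ∑ i, hA.eigenvalues i := by
  simpa using hA.trace_eq_sum_eigenvalues

open scoped MatrixOrder in
theorem IsHermitian.mul_dotProduct_self_le {A : Matrix n n ℝ} (hA : A.IsHermitian) {μ : ℝ}
    (hμ : ∀ i, μ ≤ hA.eigenvalues i) (v : n → ℝ) : μ * (v ⬝ᵥ v) ≤ v ⬝ᵥ A *ᵥ v := by
  have hle : algebraMap ℝ (Matrix n n ℝ) μ ≤ A := algebraMap_le_of_le_spectrum (by
    rw [hA.spectrum_real_eq_range_eigenvalues]; rintro _ ⟨i, rfl⟩; exact hμ i) hA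
  have := (Matrix.le_iff.mp hle).dotProduct_mulVec_nonneg v
  rwa [star_trivial, sub_mulVec, dotProduct_sub, sub_nonneg, Algebra.algebraMap_eq_smul_one,
    smul_mulVec, one_mulVec, dotProduct_smul, smul_eq_mul] at this

theorem PosDef.exists_eigenvalue_le_dotProduct_mulVec {A : Matrix n n ℝ} (hA : A.PosDef)
    {v : n → ℝ} (hv : ‖v‖ = 1) : ∃ k, hA.1.eigenvalues k ≤ v ⬝ᵥ A *ᵥ v := by
  have : Nonempty n := by
    by_contra h
    rw [not_nonempty_iff] at h
    simp [Subsingleton.elim v 0] at hv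
  obtain ⟨k, hk⟩ := Finite.exists_min hA.1.eigenvalues
  refine ⟨k, ?_⟩
  calc hA.1.eigenvalues k ≤ hA.1.eigenvalues k * (v ⬝ᵥ v) := by
        refine le_mul_of_one_le_right (hA.eigenvalues_pos k).le ?_
        simpa [hv] using sq_norm_le_dotProduct_self v
    _ ≤ v ⬝ᵥ A *ᵥ v := hA.1.mul_dotProduct_self_le hk v

theorem PosDef.log_det_eq_sum_log_eigenvalues {A : Matrix n n ℝ} (hA : A.PosDef) :
    Real.log A.det = ∑ i, Real.log (hA.1.eigenvalues i) := by
  rw [hA.1.det_eq_prod_eigenvalues]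
  exact Real.log_prod fun i _ => (hA.eigenvalues_pos i).ne'

theorem PosDef.log_det_le {A : Matrix n n ℝ} (hA : A.PosDef) {c : ℝ} (hc : 0 < c) :
    Real.log A.det ≤ Fintype.card n * (Real.log c - 1) + A.trace / c := by
  rw [hA.log_det_eq_sum_log_eigenvalues, hA.1.trace_eq_sum_eigenvalues_real]
  exact sum_log_le_of_pos hA.eigenvalues_pos hc

theorem PosDef.log_det_le_log_eigenvalue_add {A : Matrix n n ℝ} (hA : A.PosDef) {c : ℝ}
    (hc : 0 < c) (k : n) :
    Real.log A.det ≤ Real.log (hA.1.eigenvalues k)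
      + (Fintype.card n - 1) * (Real.log c - 1) + A.trace / c := by
  rw [hA.log_det_eq_sum_log_eigenvalues, hA.1.trace_eq_sum_eigenvalues_real]
  exact sum_log_le_log_add_of_pos hA.eigenvalues_pos hc k

end Matrix

section GraphicalLasso

variable {n : Type*} [Fintype n] [DecidableEq n] {S Θ : Matrix n n ℝ} {lam : ℝ}

noncomputable def glassoObjective (S : Matrix n n ℝ) (lam : ℝ) (Θ : Matrix n n ℝ) : ℝ :=
  Real.log Θ.det - (S * Θ).trace - lam * ∑ i, ∑ j, |Θ i j|

theorem glassoObjective_le_log_det_sub (hS : S.PosSemidef) (hΘ : Θ.PosDef) :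
    glassoObjective S lam Θ ≤ Real.log Θ.det - lam * ∑ i, ∑ j, |Θ i j| := by
  have := hS.trace_mul_nonneg hΘ.posSemidef
  unfold glassoObjective
  linarith

theorem glassoObjective_le_sub_l1 (hS : S.PosSemidef) (hlam : 0 < lam) (hΘ : Θ.PosDef) :
    glassoObjective S lam Θ
      ≤ Fintype.card n * (Real.log (2 / lam) - 1) - lam / 2 * ∑ i, ∑ j, |Θ i j| := by
  have hdet := hΘ.log_det_le (div_pos two_pos hlam)
  have htr : Θ.trace / (2 / lam) ≤ lam / 2 * ∑ i, ∑ j, |Θ i j| := by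
    rw [div_div_eq_mul_div, mul_div_assoc, mul_comm]
    exact mul_le_mul_of_nonneg_left Θ.trace_le_sum_sum_abs (by positivity)
  linarith [glassoObjective_le_log_det_sub (lam := lam) hS hΘ]

theorem glassoObjective_le_log_eigenvalue_add (hS : S.PosSemidef) (hlam : 0 < lam)
    (hΘ : Θ.PosDef) (k : n) :
    glassoObjective S lam Θ
      ≤ Real.log (hΘ.1.eigenvalues k) + (Fintype.card n - 1) * (Real.log (1 / lam) - 1) := by
  have hdet := hΘ.log_det_le_log_eigenvalue_add (one_div_pos.2 hlam) k
  have htr : Θ.trace / (1 / lam) ≤ lam * ∑ i, ∑ j, |Θ i j| := by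
    rw [div_div_eq_mul_div, div_one, mul_comm]
    exact mul_le_mul_of_nonneg_left Θ.trace_le_sum_sum_abs hlam.le
  linarith [glassoObjective_le_log_det_sub (lam := lam) hS hΘ]

end GraphicalLasso

/-- for λ > 0 and S positive semidefinite, the graphical lasso objective
f(Θ) = log det Θ − tr(SΘ) − λ‖Θ‖₁ tends to −∞ as the smallest eigenvalue of Θ
tends to 0 (Rayleigh-quotient formulation) and as ‖Θ‖₁ → ∞; consequently its
supremum over positive definite matrices is finite. -/
theorem glasso_objective_coercive_and_bounded (p : ℕ) (S : Matrix (Fin p) (Fin p) ℝ)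
    (hS : S.PosSemidef) (lam : ℝ) (hlam : 0 < lam) :
    (∀ B : ℝ, ∃ δ > (0:ℝ), ∀ Θ : Matrix (Fin p) (Fin p) ℝ, Θ.PosDef →
      (∃ v : Fin p → ℝ, ‖v‖ = 1 ∧ v ⬝ᵥ Θ.mulVec v < δ) →
      Real.log Θ.det - Matrix.trace (S * Θ) - lam * ∑ i, ∑ j, |Θ i j| < B) ∧
    (∀ B : ℝ, ∃ R : ℝ, ∀ Θ : Matrix (Fin p) (Fin p) ℝ, Θ.PosDef →
      R ≤ ∑ i, ∑ j, |Θ i j| →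
      Real.log Θ.det - Matrix.trace (S * Θ) - lam * ∑ i, ∑ j, |Θ i j| < B) ∧
    (∃ C : ℝ, ∀ Θ : Matrix (Fin p) (Fin p) ℝ, Θ.PosDef →
      Real.log Θ.det - Matrix.trace (S * Θ) - lam * ∑ i, ∑ j, |Θ i j| ≤ C) := by
  set K := Fintype.card (Fin p) * (Real.log (2 / lam) - 1)
  refine ⟨fun B => ?_, fun B => ?_, ⟨K, fun Θ hΘ => ?_⟩⟩
  · set K₁ := (Fintype.card (Fin p) - 1) * (Real.log (1 / lam) - 1)
    refine ⟨Real.exp (B - K₁), Real.exp_pos _, ?_⟩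
    rintro Θ hΘ ⟨v, hv, hvδ⟩
    show glassoObjective S lam Θ < B
    obtain ⟨k, hk⟩ := hΘ.exists_eigenvalue_le_dotProduct_mulVec hv
    have hlog : Real.log (hΘ.1.eigenvalues k) < B - K₁ :=
      (Real.log_lt_iff_lt_exp (hΘ.eigenvalues_pos k)).2 (hk.trans_lt hvδ)
    linarith [glassoObjective_le_log_eigenvalue_add hS hlam hΘ k]
  · refine ⟨2 / lam * (K - B + 1), fun Θ hΘ hR => ?_⟩
    show glassoObjective S lam Θ < B
    have hscaled : K - B + 1 ≤ lam / 2 * ∑ i, ∑ j, |Θ i j| := by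
      calc K - B + 1 = lam / 2 * (2 / lam * (K - B + 1)) := by field_simp
        _ ≤ _ := mul_le_mul_of_nonneg_left hR (by positivity)
    linarith [glassoObjective_le_sub_l1 hS hlam hΘ]
  · show glassoObjective S lam Θ ≤ K
    have hl1 : 0 ≤ lam / 2 * ∑ i, ∑ j, |Θ i j| := by positivity
    linarith [glassoObjective_le_sub_l1 hS hlam hΘ]
end

section
/- The penalized log-likelihood lᵖ(γ) = Σᵢ log f(yᵢ; γ) − λ Σ_k ‖Θ_k‖₁ of a K-component mean-zero Gaussian mixture is bounded above over all γ with π_k > 0, Σπ_k = 1 and Θ_k positive definite, for any λ > 0 and any finite sample y₁,…,y_n ∈ ℝ^p. -/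
open Matrix Finset

/-- Mean-zero multivariate Gaussian density with precision matrix Θ. -/
noncomputable def gaussMV {p : ℕ} (Θ : Matrix (Fin p) (Fin p) ℝ) (y : Fin p → ℝ) : ℝ :=
  (2 * Real.pi) ^ (-(p : ℝ) / 2) * Real.sqrt Θ.det *
    Real.exp (-(y ⬝ᵥ Θ.mulVec y) / 2)

/-! Each Gaussian density is at most `√(det Θ) ≤ √(p! ‖Θ‖₁ᵖ)`, and a mixture with weights in
`[0, 1]` satisfies `log f ≤ log K + Σₖ log⁺ φₖ`. Hence the log-likelihood grows at most like
`(n p / 2) log⁺ ‖Θₖ‖₁` in each component, which the linear penalty `λ ‖Θₖ‖₁` dominates: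
`a log⁺ t - λ t ≤ a² / λ`. -/

open scoped Nat

section

open Real

namespace Matrix

variable {m : Type*} [Fintype m] [DecidableEq m]

theorem abs_det_le_factorial_mul_sum_abs_pow (M : Matrix m m ℝ) :
    |M.det| ≤ (Fintype.card m)! * (∑ a, ∑ b, |M a b|) ^ Fintype.card m := by
  have hentry : ∀ a b, |M a b| ≤ ∑ a, ∑ b, |M a b| := fun a b =>
    calc |M a b| ≤ ∑ b, |M a b| :=
        single_le_sum (f := fun b => |M a b|) (fun _ _ => abs_nonneg _) (mem_univ b)
      _ ≤ ∑ a, ∑ b, |M a b| :=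
        single_le_sum (f := fun a => ∑ b, |M a b|)
          (fun _ _ => sum_nonneg fun _ _ => abs_nonneg _) (mem_univ a)
  simpa [nsmul_eq_mul] using det_le (abv := AbsoluteValue.abs) hentry

theorem posLog_det_le (M : Matrix m m ℝ) :
    log⁺ M.det ≤ log (Fintype.card m)! + Fintype.card m * log⁺ (∑ a, ∑ b, |M a b|) :=
  calc log⁺ M.det = log⁺ |M.det| := (posLog_abs _).symm
    _ ≤ log⁺ ((Fintype.card m)! * (∑ a, ∑ b, |M a b|) ^ Fintype.card m) :=
      posLog_le_posLog (abs_nonneg _) (abs_det_le_factorial_mul_sum_abs_pow M)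
    _ ≤ _ := by rw [← posLog_pow]; exact posLog_nat_mul

end Matrix

namespace Real

theorem posLog_sqrt_le (x : ℝ) : log⁺ √x ≤ log⁺ x / 2 := by
  rcases le_or_gt x 0 with hx | hx
  · rw [sqrt_eq_zero'.2 hx, posLog_zero]
    exact div_nonneg posLog_nonneg zero_le_two
  · simp only [posLog_apply, log_sqrt hx.le]
    exact max_le (by positivity) (by linarith [le_max_right 0 (log x)])

theorem posLog_le_two_mul_sqrt {t : ℝ} (ht : 0 ≤ t) : log⁺ t ≤ 2 * √t := by
  refine max_le (by positivity) ?_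
  simpa [sqrt_eq_rpow, div_eq_mul_inv, mul_comm] using log_le_rpow_div ht one_half_pos

theorem mul_posLog_sub_mul_le {a lam t : ℝ} (ha : 0 ≤ a) (hlam : 0 < lam) (ht : 0 ≤ t) :
    a * log⁺ t - lam * t ≤ a ^ 2 / lam := by
  have hsqrt : √t ^ 2 = t := sq_sqrt ht
  rw [le_div_iff₀ hlam]
  calc (a * log⁺ t - lam * t) * lam ≤ (a * (2 * √t) - lam * √t ^ 2) * lam := by
        rw [hsqrt]; gcongr; exact posLog_le_two_mul_sqrt ht
    _ ≤ a ^ 2 := by nlinarith [sq_nonneg (a - lam * √t)]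

theorem log_sum_mul_le_log_card_add_sum_posLog {ι : Type*} (s : Finset ι) {w g : ι → ℝ}
    (hw₀ : ∀ i ∈ s, 0 ≤ w i) (hw₁ : ∀ i ∈ s, w i ≤ 1) (hg : ∀ i ∈ s, 0 ≤ g i) :
    log (∑ i ∈ s, w i * g i) ≤ log #s + ∑ i ∈ s, log⁺ (g i) :=
  calc log (∑ i ∈ s, w i * g i) ≤ log⁺ (∑ i ∈ s, w i * g i) := le_max_right _ _
    _ ≤ log⁺ (∑ i ∈ s, g i) :=
      posLog_le_posLog (sum_nonneg fun i hi => mul_nonneg (hw₀ i hi) (hg i hi))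
        (sum_le_sum fun i hi => mul_le_of_le_one_left (hg i hi) (hw₁ i hi))
    _ ≤ log #s + ∑ i ∈ s, log⁺ (g i) := posLog_sum s g

end Real

section gaussMV

variable {p : ℕ} (Θ : Matrix (Fin p) (Fin p) ℝ) (y : Fin p → ℝ)

theorem gaussMV_nonneg : 0 ≤ gaussMV Θ y := by
  unfold gaussMV; positivity

theorem gaussMV_le_sqrt_det (hΘ : Θ.PosSemidef) : gaussMV Θ y ≤ √Θ.det := by
  have hconst : (2 * π) ^ (-(p : ℝ) / 2) ≤ 1 :=
    rpow_le_one_of_one_le_of_nonpos (by linarith [pi_gt_three])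
      (by linarith [p.cast_nonneg (α := ℝ)])
  have hquad : 0 ≤ y ⬝ᵥ Θ *ᵥ y := by simpa using hΘ.dotProduct_mulVec_nonneg y
  have hexp : exp (-(y ⬝ᵥ Θ *ᵥ y) / 2) ≤ 1 := exp_le_one_iff.2 (by linarith)
  calc gaussMV Θ y ≤ 1 * √Θ.det * 1 := by unfold gaussMV; gcongr
    _ = √Θ.det := by ring

theorem posLog_gaussMV_le (hΘ : Θ.PosSemidef) :
    log⁺ (gaussMV Θ y) ≤ (log p ! + p * log⁺ (∑ a, ∑ b, |Θ a b|)) / 2 :=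
  calc log⁺ (gaussMV Θ y) ≤ log⁺ √Θ.det :=
        posLog_le_posLog (gaussMV_nonneg Θ y) (gaussMV_le_sqrt_det Θ y hΘ)
    _ ≤ log⁺ Θ.det / 2 := posLog_sqrt_le _
    _ ≤ _ := by simpa using div_le_div_of_nonneg_right (posLog_det_le Θ) two_pos.le

end gaussMV

end

-- Opening all of `Real` would turn the binder `π` below into `Real.pi`.
open Real (log posLog)

/-- the ℓ₁-penalized log-likelihood of a K-component mean-zero Gaussian
mixture is bounded above over the whole parameter space, for any λ > 0 and any
finite sample. -/
theorem penalized_loglik_bounded_above (K n p : ℕ) (lam : ℝ) (hlam : 0 < lam)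
    (y : Fin n → (Fin p → ℝ)) :
    ∃ C : ℝ, ∀ (π : Fin K → ℝ) (Θ : Fin K → Matrix (Fin p) (Fin p) ℝ),
      (∀ k, 0 < π k) → ∑ k, π k = 1 → (∀ k, (Θ k).PosDef) →
      (∑ i, Real.log (∑ k, π k * gaussMV (Θ k) (y i))) -
          lam * ∑ k, ∑ a, ∑ b, |Θ k a b| ≤ C := by
  refine ⟨n * log K + K * (n * log p ! / 2 + (n * p / 2) ^ 2 / lam),
    fun π Θ hπ hπ_sum hΘ => ?_⟩
  set S : Fin K → ℝ := fun k => ∑ a, ∑ b, |Θ k a b|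
  have hπ_le_one : ∀ k, π k ≤ 1 := fun k =>
    hπ_sum ▸ single_le_sum (fun j _ => (hπ j).le) (mem_univ k)
  have hmixture : ∀ i, log (∑ k, π k * gaussMV (Θ k) (y i)) ≤
      log K + ∑ k, (log p ! + p * posLog (S k)) / 2 := fun i =>
    calc log (∑ k, π k * gaussMV (Θ k) (y i))
        ≤ log K + ∑ k, posLog (gaussMV (Θ k) (y i)) := by
          simpa using Real.log_sum_mul_le_log_card_add_sum_posLog univ (fun k _ => (hπ k).le)
            (fun k _ => hπ_le_one k) (fun k _ => gaussMV_nonneg (Θ k) (y i))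
      _ ≤ _ := by gcongr with k; exact posLog_gaussMV_le _ _ (hΘ k).posSemidef
  calc (∑ i, log (∑ k, π k * gaussMV (Θ k) (y i))) - lam * ∑ k, S k
      ≤ (∑ _i : Fin n, (log K + ∑ k, (log p ! + p * posLog (S k)) / 2)) - lam * ∑ k, S k := by
        gcongr with i; exact hmixture i
    _ = n * log K + ∑ k, (n * log p ! / 2 + ((n * p / 2) * posLog (S k) - lam * S k)) := by
        rw [sum_const, card_univ, Fintype.card_fin, nsmul_eq_mul, mul_add, mul_sum, mul_sum,
          add_sub_assoc, ← sum_sub_distrib]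
        congr 1
        exact sum_congr rfl fun k _ => by ring
    _ ≤ n * log K + ∑ _k : Fin K, (n * log p ! / 2 + (n * p / 2) ^ 2 / lam) := by
        gcongr with k
        exact Real.mul_posLog_sub_mul_le (by positivity) hlam
          (sum_nonneg fun _ _ => sum_nonneg fun _ _ => abs_nonneg _)
    _ = _ := by rw [sum_const, card_univ, Fintype.card_fin, nsmul_eq_mul]
end
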